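/- Let t : ℕ → ℕ be the Thue–Morse sequence, defined by t(0) = 0, t(2n) = t(n) and t(2n+1) = 1 − t(n) (equivalently, t(n) is the parity of the number of 1's in the binary expansion of n). Then the probability measures μ_N = (1/Σ(N)) Σ_{n=0}^{2^N−1} t(2^N + n)·δ_{n/2^N}, where Σ(N) = Σ_{n=0}^{2^N−1} t(2^N + n), converge weakly as N → ∞ to Lebesgue measure restricted to [0,1). -/

import Mathlib

open MeasureTheory Filter Topology

/-- The `N`-th approximant to the ghost measure of `f`: the normalised Dirac comb built from
the values of `f` on the fundamental region `[2^N, 2^(N+1))`. -/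
noncomputable def ghostApprox (f : ℕ → ℕ) (N : ℕ) : Measure ℝ :=
  (∑ n ∈ Finset.range (2 ^ N), (f (2 ^ N + n) : ENNReal))⁻¹ •
    ∑ n ∈ Finset.range (2 ^ N), (f (2 ^ N + n) : ENNReal) • Measure.dirac ((n : ℝ) / 2 ^ N)

/-- Weak (vague) convergence of a sequence of finite measures on `ℝ`. -/
def WeakLimit (μs : ℕ → Measure ℝ) (μ : Measure ℝ) : Prop :=
  ∀ g : BoundedContinuousFunction ℝ ℝ,
    Tendsto (fun N => ∫ x, g x ∂(μs N)) atTop (𝓝 (∫ x, g x ∂μ))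

/-!
For `N = K + 1` the weights `t (2^N + n)` come in pairs `t (2k) + t (2k+1) = 1` (with
`k = 2^K + m ≥ 1`), so `Σ(N) = 2^K`, and pair by pair the integral of `g` against `μ_N` differs
from the dyadic Riemann sum `2^(-K) * ∑_{m < 2^K} g (m / 2^K)` by at most the oscillation of `g`
over intervals of length `2^(-N)`. Uniform continuity of `g` on `[0, 1]` makes that oscillation,
and with it the error of the Riemann sum, tend to `0`.
-/

open Finset Set

noncomputable def dyadicRiemannSum (g : ℝ → ℝ) (N : ℕ) : ℝ :=
  (2 ^ N)⁻¹ * ∑ k ∈ range (2 ^ N), g (k / 2 ^ N)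

lemma sum_range_two_mul_eq_sum_pairs {M : Type*} [AddCommMonoid M] (a : ℕ → M) (k : ℕ) :
    ∑ n ∈ range (2 * k), a n = ∑ m ∈ range k, (a (2 * m) + a (2 * m + 1)) := by
  induction k with
  | zero => simp
  | succ k ih =>
    rw [mul_add, mul_one, sum_range_succ, sum_range_succ, sum_range_succ, ih, add_assoc]

lemma Continuous.eventually_abs_sub_le_of_abs_sub_le_inv_two_pow {g : ℝ → ℝ}
    (hg : Continuous g) {ε : ℝ} (hε : 0 < ε) :
    ∀ᶠ N : ℕ in atTop, ∀ x ∈ Icc (0 : ℝ) 1, ∀ y ∈ Icc (0 : ℝ) 1,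
      |x - y| ≤ (2 ^ N)⁻¹ → |g x - g y| ≤ ε := by
  obtain ⟨δ, hδ, hgδ⟩ := Metric.uniformContinuousOn_iff.1
    (isCompact_Icc.uniformContinuousOn_of_continuous hg.continuousOn) ε hε
  have hpow : Tendsto (fun N : ℕ => ((2 : ℝ) ^ N)⁻¹) atTop (𝓝 0) :=
    tendsto_inv_atTop_zero.comp (tendsto_pow_atTop_atTop_of_one_lt one_lt_two)
  filter_upwards [hpow.eventually (gt_mem_nhds hδ)] with N hN x hx y hy hxy
  exact (hgδ x hx y hy (hxy.trans_lt hN)).le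

lemma abs_integral_sub_dyadicRiemannSum_le {g : ℝ → ℝ} (hg : Continuous g) {ε : ℝ}
    {N : ℕ} (hosc : ∀ x ∈ Icc (0 : ℝ) 1, ∀ y ∈ Icc (0 : ℝ) 1,
      |x - y| ≤ (2 ^ N)⁻¹ → |g x - g y| ≤ ε) :
    |(∫ x in (0 : ℝ)..1, g x) - dyadicRiemannSum g N| ≤ ε := by
  set a : ℕ → ℝ := fun k => k / 2 ^ N with ha
  have ha_succ (k : ℕ) : a (k + 1) - a k = (2 ^ N)⁻¹ := by simp only [ha]; push_cast; ring
  have hstep : (0 : ℝ) < (2 ^ N)⁻¹ := by positivity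
  have hint :
      ∫ x in (0 : ℝ)..1, g x = ∑ k ∈ range (2 ^ N), ∫ x in a k..a (k + 1), g x := by
    rw [intervalIntegral.sum_integral_adjacent_intervals fun k _ => hg.intervalIntegrable _ _]
    simp [ha]
  have hsum : dyadicRiemannSum g N = ∑ k ∈ range (2 ^ N), ∫ _ in a k..a (k + 1), g (a k) := by
    simp only [dyadicRiemannSum, intervalIntegral.integral_const, ha_succ, smul_eq_mul, mul_sum]
    rfl
  have hterm : ∀ k ∈ range (2 ^ N),
      |∫ x in a k..a (k + 1), (g x - g (a k))| ≤ ε * (2 ^ N)⁻¹ := by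
    intro k hk
    have hk1 : a (k + 1) ≤ 1 := by
      simp only [ha]
      rw [div_le_one (by positivity)]
      exact_mod_cast Finset.mem_range.1 hk
    have hak : a k ∈ Icc (0 : ℝ) 1 := ⟨by positivity, by linarith [ha_succ k]⟩
    have hbound : ∀ x ∈ uIoc (a k) (a (k + 1)), ‖g x - g (a k)‖ ≤ ε := by
      intro x hx
      rw [uIoc_of_le (by linarith [ha_succ k])] at hx
      refine hosc x ⟨hak.1.trans hx.1.le, hx.2.trans hk1⟩ (a k) hak ?_
      rw [abs_of_pos (sub_pos.2 hx.1)]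
      linarith [ha_succ k, hx.2]
    simpa [ha_succ, ← Real.norm_eq_abs] using
      intervalIntegral.norm_integral_le_of_norm_le_const hbound
  calc |(∫ x in (0 : ℝ)..1, g x) - dyadicRiemannSum g N|
      = |∑ k ∈ range (2 ^ N), ∫ x in a k..a (k + 1), (g x - g (a k))| := by
        rw [hint, hsum, ← sum_sub_distrib]
        congr 1
        refine sum_congr rfl fun k _ => ?_
        rw [intervalIntegral.integral_sub (hg.intervalIntegrable _ _) intervalIntegrable_const]
    _ ≤ ∑ _k ∈ range (2 ^ N), ε * (2 ^ N)⁻¹ :=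
        (abs_sum_le_sum_abs _ _).trans (sum_le_sum hterm)
    _ = ε := by rw [sum_const, card_range, nsmul_eq_mul, Nat.cast_pow, Nat.cast_ofNat,
      mul_left_comm, mul_inv_cancel₀ (by positivity), mul_one]

lemma tendsto_dyadicRiemannSum {g : ℝ → ℝ} (hg : Continuous g) :
    Tendsto (dyadicRiemannSum g) atTop (𝓝 (∫ x in (0 : ℝ)..1, g x)) := by
  refine Metric.tendsto_nhds.2 fun ε hε => ?_
  filter_upwards [hg.eventually_abs_sub_le_of_abs_sub_le_inv_two_pow (half_pos hε)] with N hN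
  rw [dist_comm, Real.dist_eq]
  exact (abs_integral_sub_dyadicRiemannSum_le hg hN).trans_lt (half_lt_self hε)

lemma abs_pairedSum_sub_dyadicRiemannSum_le {g : ℝ → ℝ} {ε : ℝ} {K : ℕ} (w : ℕ → ℕ)
    (hw : ∀ m, w (2 * m) + w (2 * m + 1) = 1)
    (hosc : ∀ x ∈ Icc (0 : ℝ) 1, ∀ y ∈ Icc (0 : ℝ) 1,
      |x - y| ≤ (2 ^ (K + 1))⁻¹ → |g x - g y| ≤ ε) :
    |(2 ^ K)⁻¹ * ∑ n ∈ range (2 ^ (K + 1)), w n * g (n / 2 ^ (K + 1)) - dyadicRiemannSum g K|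
      ≤ ε := by
  set x : ℕ → ℝ := fun n => n / 2 ^ (K + 1) with hx
  have hx_even (m : ℕ) : x (2 * m) = m / 2 ^ K := by simp only [hx]; push_cast; field_simp; ring
  have hx_odd (m : ℕ) : x (2 * m + 1) - x (2 * m) = (2 ^ (K + 1))⁻¹ := by
    simp only [hx]; push_cast; ring
  set d : ℕ → ℝ := fun m => g (x (2 * m + 1)) - g (x (2 * m)) with hd
  have hpair (m : ℕ) :
      (w (2 * m) * g (x (2 * m)) + w (2 * m + 1) * g (x (2 * m + 1))) - g (m / 2 ^ K)
        = w (2 * m + 1) * d m := by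
    have : (w (2 * m) : ℝ) = 1 - w (2 * m + 1) := by
      rw [eq_sub_iff_add_eq]; exact_mod_cast hw m
    simp only [this, hd, hx_even]; ring
  have hterm : ∀ m ∈ range (2 ^ K), |(w (2 * m + 1) : ℝ) * d m| ≤ ε := by
    intro m hm
    have hm1 : ((2 * m + 1 : ℕ) : ℝ) ≤ 2 ^ (K + 1) := by
      rw [pow_succ']; exact_mod_cast (by have := Finset.mem_range.1 hm; omega)
    have hmem (n : ℕ) (hn : (n : ℝ) ≤ 2 ^ (K + 1)) : x n ∈ Icc (0 : ℝ) 1 :=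
      ⟨by positivity, (div_le_one (by positivity)).2 hn⟩
    have hw1 : |(w (2 * m + 1) : ℝ)| ≤ 1 := by
      rw [Nat.abs_cast]; exact_mod_cast (by have := hw m; omega : w (2 * m + 1) ≤ 1)
    rw [abs_mul, ← one_mul ε]
    refine mul_le_mul hw1 (hosc _ (hmem _ hm1) _ (hmem _ (le_trans (by simp) hm1)) ?_)
      (abs_nonneg _) zero_le_one
    rw [hx_odd, abs_of_pos (by positivity)]
  calc |(2 ^ K)⁻¹ * ∑ n ∈ range (2 ^ (K + 1)), w n * g (x n) - dyadicRiemannSum g K|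
      = (2 ^ K)⁻¹ * |∑ m ∈ range (2 ^ K), (w (2 * m + 1) : ℝ) * d m| := by
        rw [dyadicRiemannSum, ← mul_sub, abs_mul, abs_of_pos (by positivity), pow_succ',
          sum_range_two_mul_eq_sum_pairs, ← sum_sub_distrib]
        simp only [hpair]
    _ ≤ (2 ^ K)⁻¹ * ∑ _m ∈ range (2 ^ K), ε := by
        gcongr; exact (abs_sum_le_sum_abs _ _).trans (sum_le_sum hterm)
    _ = ε := by rw [sum_const, card_range, nsmul_eq_mul, Nat.cast_pow, Nat.cast_ofNat,
      ← mul_assoc, inv_mul_cancel₀ (by positivity), one_mul]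

lemma tendsto_pairedSum {g : ℝ → ℝ} (hg : Continuous g) (w : ℕ → ℕ → ℕ)
    (hw : ∀ K m, w K (2 * m) + w K (2 * m + 1) = 1) :
    Tendsto (fun K => (2 ^ K)⁻¹ * ∑ n ∈ range (2 ^ (K + 1)), w K n * g (n / 2 ^ (K + 1)))
      atTop (𝓝 (∫ x in (0 : ℝ)..1, g x)) := by
  refine (tendsto_dyadicRiemannSum hg).congr_dist (Metric.tendsto_nhds.2 fun ε hε => ?_)
  filter_upwards [(tendsto_add_atTop_nat 1).eventually
    (hg.eventually_abs_sub_le_of_abs_sub_le_inv_two_pow (half_pos hε))] with K hK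
  rw [Real.dist_0_eq_abs, abs_dist, dist_comm, Real.dist_eq]
  exact (abs_pairedSum_sub_dyadicRiemannSum_le (w K) (hw K) hK).trans_lt (half_lt_self hε)

lemma sum_range_two_mul_of_pairs_eq_one (w : ℕ → ℕ)
    (hw : ∀ m, w (2 * m) + w (2 * m + 1) = 1) (k : ℕ) :
    ∑ n ∈ range (2 * k), (w n : ℝ) = k := by
  rw [sum_range_two_mul_eq_sum_pairs]
  simp only [← Nat.cast_add, hw, Nat.cast_one, sum_const, card_range, nsmul_one]

lemma integral_ghostApprox (f : ℕ → ℕ) (N : ℕ) (g : ℝ → ℝ) :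
    ∫ x, g x ∂ghostApprox f N = (∑ n ∈ range (2 ^ N), (f (2 ^ N + n) : ℝ))⁻¹ *
      ∑ n ∈ range (2 ^ N), f (2 ^ N + n) * g (n / 2 ^ N) := by
  have hint : ∀ n ∈ range (2 ^ N),
      Integrable g ((f (2 ^ N + n) : ENNReal) • Measure.dirac ((n : ℝ) / 2 ^ N)) :=
    fun n _ => (integrable_dirac enorm_lt_top).smul_measure (ENNReal.natCast_ne_top _)
  rw [ghostApprox, integral_smul_measure, integral_finsetSum_measure hint, ENNReal.toReal_inv,
    ENNReal.toReal_sum fun n _ => ENNReal.natCast_ne_top _, smul_eq_mul]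
  simp only [integral_smul_measure, integral_dirac, ENNReal.toReal_natCast, smul_eq_mul]

lemma le_one_of_thueMorse_rec {t : ℕ → ℕ} (heven : ∀ n, t (2 * n) = t n)
    (hodd : ∀ n, t (2 * n + 1) = 1 - t n) {n : ℕ} (hn : n ≠ 0) : t n ≤ 1 := by
  induction n using Nat.strong_induction_on with
  | _ n ih =>
    obtain ⟨m, rfl | rfl⟩ := Nat.even_or_odd' n
    · rw [heven]; exact ih m (by omega) (by omega)
    · rw [hodd]; exact Nat.sub_le _ _

lemma add_eq_one_of_thueMorse_rec {t : ℕ → ℕ} (heven : ∀ n, t (2 * n) = t n)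
    (hodd : ∀ n, t (2 * n + 1) = 1 - t n) {n : ℕ} (hn : n ≠ 0) :
    t (2 * n) + t (2 * n + 1) = 1 := by
  rw [heven, hodd]
  have := le_one_of_thueMorse_rec heven hodd hn
  omega

theorem stmt_19_general (t : ℕ → ℕ)
    (heven : ∀ n, t (2 * n) = t n) (hodd : ∀ n, t (2 * n + 1) = 1 - t n) :
    WeakLimit (ghostApprox t) (volume.restrict (Set.Ico (0:ℝ) 1)) := by
  intro g
  set w : ℕ → ℕ → ℕ := fun K n => t (2 ^ (K + 1) + n) with hw_def
  have hw (K m : ℕ) : w K (2 * m) + w K (2 * m + 1) = 1 := by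
    simpa only [hw_def, pow_succ', mul_add, add_assoc] using
      add_eq_one_of_thueMorse_rec heven hodd (n := 2 ^ K + m) (by positivity)
  have hmass (K : ℕ) : ∑ n ∈ range (2 ^ (K + 1)), (w K n : ℝ) = 2 ^ K := by
    rw [pow_succ', sum_range_two_mul_of_pairs_eq_one (w K) (hw K), Nat.cast_pow, Nat.cast_ofNat]
  rw [integral_Ico_eq_integral_Ioo, ← integral_Ioc_eq_integral_Ioo,
    ← intervalIntegral.integral_of_le zero_le_one, ← tendsto_add_atTop_iff_nat 1]
  refine (tendsto_pairedSum g.continuous w hw).congr fun K => ?_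
  rw [integral_ghostApprox, ← hmass]

theorem stmt_19 (t : ℕ → ℕ) (h0 : t 0 = 0)
    (heven : ∀ n, t (2 * n) = t n) (hodd : ∀ n, t (2 * n + 1) = 1 - t n) :
    WeakLimit (ghostApprox t) (volume.restrict (Set.Ico (0:ℝ) 1)) :=
  stmt_19_general t heven hodd
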